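/- arXiv:1708.04582 — 2 statements merged into one kernel-verified Lean document; each statement's English description precedes it below -/
import Mathlib

section
/- Let R be a commutative local ring with maximal ideal m, and let M'' ⊆ M' ⊆ M be R-modules (M'' and M' submodules of M). Suppose that M' and M'/M'' are minimally generated by the same finite number n of elements, and that M is finitely generated over R. Then M and M/M'' are minimally generated by the same number of elements. -/
/-- An `R`-module `P` is minimally generated by `n` elements if `n` is the least
cardinality of a finite subset of `P` spanning `P` as an `R`-module. -/
def MinimallyGeneratedBy (R : Type*) [CommRing R] (P : Type*) [AddCommGroup P]
    [Module R P] (n : ℕ) : Prop :=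
  IsLeast {k : ℕ | ∃ s : Finset P, s.card = k ∧ Submodule.span R (s : Set P) = ⊤} n

open IsLocalRing Submodule

attribute [local instance] Ideal.Quotient.field

section Aux

variable {R : Type*} [CommRing R] [IsLocalRing R]
variable {P : Type*} [AddCommGroup P] [Module R P]

local notation "𝔪" => IsLocalRing.maximalIdeal R
local notation "𝕜" => R ⧸ IsLocalRing.maximalIdeal R

noncomputable instance auxTower :
    IsScalarTower R 𝕜 (P ⧸ (𝔪 • ⊤ : Submodule R P)) :=
  Module.IsTorsionBySet.isScalarTower _

lemma aux_span_iff [Module.Finite R P] (s : Set P) :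
    Submodule.span R s = ⊤ ↔
      Submodule.span 𝕜 ((𝔪 • ⊤ : Submodule R P).mkQ '' s) = ⊤ := by
  rw [← IsLocalRing.map_mkQ_eq_top (N := Submodule.span R s), Submodule.map_span,
    ← Submodule.restrictScalars_span R 𝕜 Ideal.Quotient.mk_surjective,
    Submodule.restrictScalars_eq_top_iff]


lemma aux_isLeast [Module.Finite R P] :
    IsLeast {k : ℕ | ∃ s : Finset P, s.card = k ∧ Submodule.span R (s : Set P) = ⊤}
      (Module.finrank 𝕜 (P ⧸ (𝔪 • ⊤ : Submodule R P))) := by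
  haveI : Module.Finite 𝕜 (P ⧸ (𝔪 • ⊤ : Submodule R P)) :=
    Module.Finite.of_restrictScalars_finite R 𝕜 _
  classical
  constructor
  · set b := Module.finBasis 𝕜 (P ⧸ (𝔪 • ⊤ : Submodule R P))
    choose f hf using fun i => (𝔪 • ⊤ : Submodule R P).mkQ_surjective (b i)
    have hinj : Function.Injective f := fun i j h => b.injective (by rw [← hf, ← hf, h])
    refine ⟨Finset.univ.image f, ?_, ?_⟩
    · rw [Finset.card_image_of_injective _ hinj, Finset.card_univ, Fintype.card_fin]
    · rw [aux_span_iff]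
      have : (𝔪 • ⊤ : Submodule R P).mkQ '' ↑(Finset.univ.image f) = Set.range b := by
        rw [Finset.coe_image, Finset.coe_univ, Set.image_univ, ← Set.range_comp]
        exact congrArg _ (funext hf)
      rw [this]; exact b.span_eq
  · rintro j ⟨s, rfl, hs⟩
    rw [aux_span_iff, Set.image_eq_range] at hs
    simpa using finrank_le_of_span_eq_top hs

lemma aux_minGen_iff [Module.Finite R P] {n : ℕ} :
    MinimallyGeneratedBy R P n ↔
      n = Module.finrank 𝕜 (P ⧸ (𝔪 • ⊤ : Submodule R P)) :=
  ⟨fun h => h.unique aux_isLeast, fun h => h ▸ aux_isLeast⟩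

end Aux
theorem minGen_quotient_eq_of_minGen_eq
    {R : Type*} [CommRing R] [IsLocalRing R]
    {M : Type*} [AddCommGroup M] [Module R M] [Module.Finite R M]
    (M' M'' : Submodule R M) (hsub : M'' ≤ M') (n : ℕ)
    (hM' : MinimallyGeneratedBy R M' n)
    (hquot : MinimallyGeneratedBy R (M' ⧸ Submodule.comap M'.subtype M'') n) :
    ∃ m : ℕ, MinimallyGeneratedBy R M m ∧ MinimallyGeneratedBy R (M ⧸ M'') m := by
  classical
  set 𝔪 := IsLocalRing.maximalIdeal R with h𝔪
  haveI hM'fin : Module.Finite R M' := by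
    obtain ⟨s, -, hs⟩ := hM'.1
    exact ⟨⟨s, hs⟩⟩
  set M''c := Submodule.comap M'.subtype M'' with hM''c
  set Q := M' ⧸ M''c with hQ
  have hn1 : n = Module.finrank (R ⧸ 𝔪) (M' ⧸ (𝔪 • ⊤ : Submodule R M')) :=
    aux_minGen_iff.mp hM'
  have hn2 : n = Module.finrank (R ⧸ 𝔪) (Q ⧸ (𝔪 • ⊤ : Submodule R Q)) :=
    aux_minGen_iff.mp hquot
  set π := M''c.mkQ with hπ
  set ρ := (𝔪 • ⊤ : Submodule R Q).mkQ with hρ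
  have hle : (𝔪 • ⊤ : Submodule R M') ≤ LinearMap.ker (ρ.comp π) := by
    intro x hx
    have h1 : π x ∈ (𝔪 • ⊤ : Submodule R Q) := by
      have h2 := Submodule.mem_map_of_mem (f := π) hx
      rw [Submodule.map_smul''] at h2
      exact Submodule.smul_mono le_rfl le_top h2
    show ρ (π x) = 0
    rw [← LinearMap.mem_ker, Submodule.ker_mkQ]
    exact h1
  set g₀ := Submodule.liftQ (𝔪 • ⊤ : Submodule R M') (ρ.comp π) hle with hg₀
  set g : (M' ⧸ (𝔪 • ⊤ : Submodule R M')) →ₗ[R ⧸ 𝔪] (Q ⧸ (𝔪 • ⊤ : Submodule R Q)) :=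
    { toFun := g₀
      map_add' := g₀.map_add
      map_smul' := fun c x => by
        obtain ⟨r, rfl⟩ := Ideal.Quotient.mk_surjective c
        obtain ⟨y, rfl⟩ := Submodule.mkQ_surjective _ x
        show g₀ (Ideal.Quotient.mk _ r • Submodule.Quotient.mk y) = _
        rw [Module.Quotient.mk_smul_mk]
        show g₀ (Submodule.Quotient.mk (r • y)) = Ideal.Quotient.mk _ r • g₀ (Submodule.Quotient.mk y)
        rw [hg₀, Submodule.liftQ_apply, Submodule.liftQ_apply, map_smul]
        rfl } with hg
  have hgsurj : Function.Surjective g := by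
    intro z
    obtain ⟨q, rfl⟩ := Submodule.mkQ_surjective _ z
    obtain ⟨y, rfl⟩ := Submodule.mkQ_surjective _ q
    exact ⟨Submodule.Quotient.mk y, rfl⟩
  haveI : Module.Finite (R ⧸ 𝔪) (M' ⧸ (𝔪 • ⊤ : Submodule R M')) :=
    Module.Finite.of_restrictScalars_finite R _ _
  have hker : LinearMap.ker g = ⊥ := by
    have h1 := LinearMap.finrank_range_add_finrank_ker g
    rw [LinearMap.range_eq_top.2 hgsurj, finrank_top] at h1
    have h2 : Module.finrank (R ⧸ 𝔪) (LinearMap.ker g) = 0 := by omega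
    exact Submodule.finrank_eq_zero.mp h2
  have hM''le : M''c ≤ (𝔪 • ⊤ : Submodule R M') := by
    intro x hx
    have h1 : g (Submodule.Quotient.mk x) = 0 := by
      show g₀ (Submodule.Quotient.mk x) = 0
      rw [hg₀, Submodule.liftQ_apply, LinearMap.comp_apply]
      have : π x = 0 := (Submodule.Quotient.mk_eq_zero _).mpr hx
      rw [this, map_zero]
    have h2 : (Submodule.Quotient.mk x : M' ⧸ (𝔪 • ⊤ : Submodule R M')) ∈ LinearMap.ker g :=
      LinearMap.mem_ker.mpr h1
    rw [hker, Submodule.mem_bot] at h2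
    exact (Submodule.Quotient.mk_eq_zero _).mp h2
  have hM''M : M'' ≤ (𝔪 • ⊤ : Submodule R M) := by
    have heq : M'' = Submodule.map M'.subtype M''c := by
      rw [hM''c, Submodule.map_comap_subtype]
      exact (inf_eq_right.mpr hsub).symm
    rw [heq]
    refine le_trans (Submodule.map_mono hM''le) ?_
    rw [Submodule.map_smul'']
    exact Submodule.smul_mono le_rfl le_top
  -- lifting lemma
  have key : ∀ t : Finset (M ⧸ M''), Submodule.span R (t : Set (M ⧸ M'')) = ⊤ →
      ∃ u : Finset M, u.card = t.card ∧ Submodule.span R (u : Set M) = ⊤ := by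
    intro t ht
    set σ : (M ⧸ M'') → M := Function.surjInv (Submodule.mkQ_surjective M'') with hσdef
    have hσ : ∀ z, M''.mkQ (σ z) = z := Function.surjInv_eq _
    have hσi : Function.Injective σ := Function.injective_surjInv _
    refine ⟨t.image σ, Finset.card_image_of_injective _ hσi, ?_⟩
    have hmap : Submodule.map M''.mkQ (Submodule.span R ((t.image σ : Finset M) : Set M)) = ⊤ := by
      rw [Finset.coe_image, Submodule.map_span, Set.image_image]
      simpa [hσ] using ht
    have h1 : Submodule.span R ((t.image σ : Finset M) : Set M) ⊔ M'' = ⊤ := by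
      have h2 := congrArg (Submodule.comap M''.mkQ) hmap
      rwa [Submodule.comap_map_eq, Submodule.ker_mkQ, Submodule.comap_top] at h2
    rw [← IsLocalRing.map_mkQ_eq_top (N := Submodule.span R ((t.image σ : Finset M) : Set M))]
    have hb : Submodule.map (Submodule.mkQ (𝔪 • ⊤ : Submodule R M)) M'' = ⊥ := by
      rw [Submodule.eq_bot_iff]
      rintro y ⟨x, hx, rfl⟩
      exact (Submodule.Quotient.mk_eq_zero _).mpr (hM''M hx)
    have h3 := congrArg (Submodule.map (Submodule.mkQ (𝔪 • ⊤ : Submodule R M))) h1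
    rwa [Submodule.map_sup, hb, sup_bot_eq, Submodule.map_top, Submodule.range_mkQ] at h3
  refine ⟨Module.finrank (R ⧸ 𝔪) (M ⧸ (𝔪 • ⊤ : Submodule R M)), aux_isLeast, ?_, ?_⟩
  · -- membership for M ⧸ M''
    obtain ⟨s, hcard, hs⟩ := (aux_isLeast (P := M) (R := R)).1
    set t := s.image M''.mkQ with htdef
    have htspan : Submodule.span R (t : Set (M ⧸ M'')) = ⊤ := by
      rw [htdef, Finset.coe_image, ← Submodule.map_span, hs, Submodule.map_top,
        Submodule.range_mkQ]
    obtain ⟨u, hu, huspan⟩ := key t htspan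
    have h4 : Module.finrank (R ⧸ 𝔪) (M ⧸ (𝔪 • ⊤ : Submodule R M)) ≤ t.card :=
      (aux_isLeast (P := M) (R := R)).2 ⟨u, hu, huspan⟩
    have h5 : t.card ≤ Module.finrank (R ⧸ 𝔪) (M ⧸ (𝔪 • ⊤ : Submodule R M)) :=
      hcard ▸ Finset.card_image_le
    exact ⟨t, le_antisymm h5 h4, htspan⟩
  · rintro j ⟨t, rfl, ht⟩
    obtain ⟨u, hu, huspan⟩ := key t ht
    exact hu ▸ (aux_isLeast (P := M) (R := R)).2 ⟨u, rfl, huspan⟩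
end

section
/- Let p ≥ 2 and f ≥ 1 be integers. Let k : ℤ/fℤ → ℤ and c : ℤ/fℤ → ℤ be functions such that c_i ≤ p − 2 for all i ∈ ℤ/fℤ, and such that c_i + k_i ≥ p·k_{i−1} for all i ∈ ℤ/fℤ (indices taken modulo f). Then k_i ≤ 0 for all i ∈ ℤ/fℤ. -/
theorem cyclic_sequence_nonpos (p f : ℕ) (hp : 2 ≤ p) (hf : 1 ≤ f)
    (k c : ZMod f → ℤ)
    (hc : ∀ i : ZMod f, c i ≤ (p : ℤ) - 2)
    (hrec : ∀ i : ZMod f, (p : ℤ) * k (i - 1) ≤ c i + k i) :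
    ∀ i : ZMod f, k i ≤ 0 := by
  intro i0
  by_contra h
  push_neg at h
  have h1 : 1 ≤ k i0 := h
  have key : ∀ m : ℕ, 1 + (m : ℤ) ≤ k (i0 + m) := by
    intro m
    induction m with
    | zero => simpa using h1
    | succ n ih =>
      have hr := hrec (i0 + (n + 1 : ℕ))
      have hc' := hc (i0 + (n + 1 : ℕ))
      have hpred : (i0 + (n + 1 : ℕ)) - 1 = i0 + (n : ℕ) := by
        push_cast
        ring
      rw [hpred] at hr
      have hp2 : (2 : ℤ) ≤ (p : ℤ) := by exact_mod_cast hp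
      have : (p : ℤ) * (1 + n) ≤ (p : ℤ) * k (i0 + n) :=
        mul_le_mul_of_nonneg_left ih (by linarith)
      push_cast at *
      nlinarith [mul_nonneg (by linarith : (0:ℤ) ≤ (p:ℤ)-1) (Int.ofNat_nonneg n)]
  have := key (f * (k i0).toNat)
  have hcast : ((i0 + (f * (k i0).toNat : ℕ)) : ZMod f) = i0 := by
    push_cast
    simp [ZMod.natCast_self]
  rw [hcast] at this
  have htn : (k i0) ≤ ((k i0).toNat : ℤ) := Int.self_le_toNat _
  have hfm : ((k i0).toNat : ℤ) ≤ ((f * (k i0).toNat : ℕ) : ℤ) := by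
    push_cast
    nlinarith [Int.ofNat_nonneg (k i0).toNat, (by exact_mod_cast hf : (1:ℤ) ≤ f)]
  linarith
end
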